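/- Let λ₁, λ₂ ∈ ℝ and σ > 1, and let φ : ℝ → ℂ be continuously differentiable with φ ∈ L^∞(ℝ) and ∂_x φ ∈ L²(ℝ). Then there exists a constant C > 0, depending only on λ₁, λ₂, σ, ‖φ‖_{L^∞} and ‖∂_x φ‖_{L²}, such that for all t ≥ 2: ‖∂_x w_p(t,·) − ∂_x w̃_p(t,·)‖_{L²(ℝ)} ≤ C t^{1−σ} log t. -/

import Mathlib

open MeasureTheory Complex ENNReal

/-- `w_p(t,x) = exp(−iλ₁|φ(x)|² log t) φ(x)`. -/
noncomputable def wp (lam1 : ℝ) (φ : ℝ → ℂ) (t x : ℝ) : ℂ :=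
  Complex.exp (-(Complex.I) * (↑lam1:ℂ) * (↑(‖φ x‖ ^ 2):ℂ) * (↑(Real.log t):ℂ)) * φ x

/-- `w̃_p(t,x) = exp(−iλ₁|φ(x)|² log t − i(λ₂/(1−σ))|φ(x)|^{2σ} t^{1−σ}) φ(x)`. -/
noncomputable def wtp (lam1 lam2 σ : ℝ) (φ : ℝ → ℂ) (t x : ℝ) : ℂ :=
  Complex.exp (-(Complex.I) * (↑lam1:ℂ) * (↑(‖φ x‖ ^ 2):ℂ) * (↑(Real.log t):ℂ)
      - Complex.I * (↑(lam2/(1-σ)):ℂ) * (↑(‖φ x‖ ^ (2*σ)):ℂ) * (↑(t ^ (1-σ)):ℂ)) * φ x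

/-! Both functions are phase modulations: `w_p = e^{iα} φ` and `w̃_p = e^{iβ} w_p` with real
phases `α = -λ₁ log t |φ|²` and `β = -(λ₂/(1-σ)) t^{1-σ} |φ|^{2σ}`. Hence
`∂w_p - ∂w̃_p = (1 - e^{iβ}) ∂w_p - i β' e^{iβ} w_p`, and `|1 - e^{iβ}| ≤ |β|`. Wherever
`|φ| ≤ M := ‖φ‖_∞` (almost everywhere) we have `|β| ≤ C t^{1-σ}`, `|β'| |φ| ≤ C t^{1-σ} |∂φ|` and
`|∂w_p| ≤ (1 + 2|λ₁| M² log t) |∂φ|`, so the difference is pointwise at most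
`C t^{1-σ} log t |∂φ|`, and its L² norm at most `C t^{1-σ} log t ‖∂φ‖_{L²}`. -/

section PhaseModulation

variable {b : ℝ → ℝ} {w : ℝ → ℂ} {x : ℝ}

lemma deriv_exp_I_mul_ofReal_mul (hb : DifferentiableAt ℝ b x) (hw : DifferentiableAt ℝ w x) :
    deriv (fun y => exp (I * b y) * w y) x = exp (I * b x) * (I * deriv b x * w x + deriv w x) := by
  have h : HasDerivAt (fun y => exp (I * b y) * w y)
      (exp (I * b x) * (I * deriv b x) * w x + exp (I * b x) * deriv w x) x :=
    ((hb.hasDerivAt.ofReal_comp.const_mul I).cexp).mul hw.hasDerivAt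
  rw [h.deriv]
  ring

lemma norm_deriv_exp_I_mul_ofReal_mul_le (hb : DifferentiableAt ℝ b x)
    (hw : DifferentiableAt ℝ w x) :
    ‖deriv (fun y => exp (I * b y) * w y) x‖ ≤ |deriv b x| * ‖w x‖ + ‖deriv w x‖ := by
  rw [deriv_exp_I_mul_ofReal_mul hb hw, norm_mul, norm_exp_I_mul_ofReal, one_mul]
  refine (norm_add_le _ _).trans_eq ?_
  simp

lemma norm_deriv_sub_deriv_exp_I_mul_ofReal_mul_le (hb : DifferentiableAt ℝ b x)
    (hw : DifferentiableAt ℝ w x) :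
    ‖deriv w x - deriv (fun y => exp (I * b y) * w y) x‖
      ≤ |b x| * ‖deriv w x‖ + |deriv b x| * ‖w x‖ := by
  rw [deriv_exp_I_mul_ofReal_mul hb hw]
  calc ‖deriv w x - exp (I * b x) * (I * deriv b x * w x + deriv w x)‖
      = ‖-((exp (I * b x) - 1) * deriv w x) + -(exp (I * b x) * (I * deriv b x * w x))‖ := by
        ring_nf
    _ ≤ ‖exp (I * b x) - 1‖ * ‖deriv w x‖ + |deriv b x| * ‖w x‖ := by
        refine (norm_add_le _ _).trans_eq ?_
        simp [norm_exp_I_mul_ofReal]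
    _ ≤ |b x| * ‖deriv w x‖ + |deriv b x| * ‖w x‖ := by
        gcongr
        exact Real.norm_exp_I_mul_ofReal_sub_one_le

end PhaseModulation

lemma abs_deriv_const_mul_norm_rpow_mul_norm_le {E : Type*} [NormedAddCommGroup E]
    [InnerProductSpace ℝ E] {f : ℝ → E} (hf : Differentiable ℝ f) {p : ℝ} (hp : 1 < p) (k : ℝ)
    {x M : ℝ} (hx : ‖f x‖ ≤ M) :
    |deriv (fun y => k * ‖f y‖ ^ p) x| * ‖f x‖ ≤ |k| * p * M ^ p * ‖deriv f x‖ := by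
  have hderiv : |deriv (fun y => ‖f y‖ ^ p) x| ≤ p * ‖f x‖ ^ (p - 1) * ‖deriv f x‖ := by
    rw [← Real.norm_eq_abs, norm_deriv_eq_norm_fderiv, norm_deriv_eq_norm_fderiv]
    exact norm_fderiv_norm_rpow_le hf hp
  have hpow : ‖f x‖ ^ (p - 1) * ‖f x‖ ≤ M ^ p := by
    rw [← Real.rpow_add_one' (norm_nonneg _) (by linarith), sub_add_cancel]
    exact Real.rpow_le_rpow (norm_nonneg _) hx (by linarith)
  rw [deriv_const_mul _ ((hf.norm_rpow hp) x), abs_mul]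
  calc |k| * |deriv (fun y => ‖f y‖ ^ p) x| * ‖f x‖
      ≤ |k| * (p * ‖f x‖ ^ (p - 1) * ‖deriv f x‖) * ‖f x‖ := by gcongr
    _ = |k| * p * (‖f x‖ ^ (p - 1) * ‖f x‖) * ‖deriv f x‖ := by ring
    _ ≤ |k| * p * M ^ p * ‖deriv f x‖ := by gcongr

lemma MeasureTheory.MemLp.ae_norm_le_toReal_eLpNorm_top {α E : Type*} [MeasurableSpace α]
    {μ : Measure α} [NormedAddCommGroup E] {f : α → E} (hf : MemLp f ∞ μ) :
    ∀ᵐ x ∂μ, ‖f x‖ ≤ (eLpNorm f ∞ μ).toReal := by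
  have hfin := hf.2.ne
  rw [eLpNorm_exponent_top] at hfin ⊢
  filter_upwards [ae_le_eLpNormEssSup (f := f) (μ := μ)] with x hx
  rw [← toReal_enorm]
  exact ENNReal.toReal_mono hfin hx

section PhaseForms

variable (lam1 lam2 σ : ℝ) (φ : ℝ → ℂ) (t : ℝ)

lemma wp_eq_exp_I_mul :
    wp lam1 φ t = fun y => exp (I * ↑(-(lam1 * Real.log t) * ‖φ y‖ ^ (2 : ℝ))) * φ y := by
  funext y
  simp only [wp, Real.rpow_two]
  push_cast
  ring_nf

lemma wtp_eq_exp_I_mul_wp :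
    wtp lam1 lam2 σ φ t = fun y =>
      exp (I * ↑(-(lam2 / (1 - σ) * t ^ (1 - σ)) * ‖φ y‖ ^ (2 * σ))) * wp lam1 φ t y := by
  funext y
  rw [wtp, wp, ← mul_assoc, ← Complex.exp_add]
  push_cast
  ring_nf

lemma norm_wp (x : ℝ) : ‖wp lam1 φ t x‖ = ‖φ x‖ := by
  rw [wp_eq_exp_I_mul, norm_mul, norm_exp_I_mul_ofReal, one_mul]

end PhaseForms

lemma norm_deriv_wp_sub_deriv_wtp_le {lam1 lam2 σ : ℝ} (hσ : 1 < σ) {φ : ℝ → ℂ}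
    (hφ : Differentiable ℝ φ) {t M x : ℝ} (ht : 1 ≤ t) (hx : ‖φ x‖ ≤ M) :
    ‖deriv (wp lam1 φ t) x - deriv (wtp lam1 lam2 σ φ t) x‖
      ≤ |lam2 / (1 - σ)| * M ^ (2 * σ) * (2 * |lam1| * M ^ (2 : ℝ) * Real.log t + 1 + 2 * σ)
        * t ^ (1 - σ) * ‖deriv φ x‖ := by
  have hM : 0 ≤ M := (norm_nonneg _).trans hx
  have hlog : 0 ≤ Real.log t := Real.log_nonneg ht
  have hT : 0 ≤ t ^ (1 - σ) := Real.rpow_nonneg (by linarith) _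
  have h2σ : 1 < 2 * σ := by linarith
  set kα := -(lam1 * Real.log t)
  set kβ := -(lam2 / (1 - σ) * t ^ (1 - σ))
  have hkα : |kα| = |lam1| * Real.log t := by simp [kα, abs_mul, abs_of_nonneg hlog]
  have hkβ : |kβ| = |lam2 / (1 - σ)| * t ^ (1 - σ) := by simp [kβ, abs_mul, abs_of_nonneg hT]
  have hα : Differentiable ℝ fun y => kα * ‖φ y‖ ^ (2 : ℝ) := (hφ.norm_rpow one_lt_two).const_mul _
  have hβ : Differentiable ℝ fun y => kβ * ‖φ y‖ ^ (2 * σ) := (hφ.norm_rpow h2σ).const_mul _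
  have hwp : DifferentiableAt ℝ (wp lam1 φ t) x := by
    rw [wp_eq_exp_I_mul]
    fun_prop
  have hβx : |kβ * ‖φ x‖ ^ (2 * σ)| ≤ |kβ| * M ^ (2 * σ) := by
    rw [abs_mul, abs_of_nonneg (Real.rpow_nonneg (norm_nonneg _) _)]
    gcongr
  have hwp' : ‖deriv (wp lam1 φ t) x‖ ≤ |kα| * 2 * M ^ (2 : ℝ) * ‖deriv φ x‖ + ‖deriv φ x‖ := by
    rw [wp_eq_exp_I_mul]
    exact (norm_deriv_exp_I_mul_ofReal_mul_le (hα x) (hφ x)).trans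
      (add_le_add_left (abs_deriv_const_mul_norm_rpow_mul_norm_le hφ one_lt_two kα hx) _)
  have hβ' := abs_deriv_const_mul_norm_rpow_mul_norm_le hφ h2σ kβ hx
  rw [wtp_eq_exp_I_mul_wp]
  refine (norm_deriv_sub_deriv_exp_I_mul_ofReal_mul_le (hβ x) hwp).trans ?_
  rw [norm_wp]
  calc _ ≤ |kβ| * M ^ (2 * σ) * (|kα| * 2 * M ^ (2 : ℝ) * ‖deriv φ x‖ + ‖deriv φ x‖)
        + |kβ| * (2 * σ) * M ^ (2 * σ) * ‖deriv φ x‖ := by gcongr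
    _ = _ := by rw [hkα, hkβ]; ring

lemma norm_deriv_wp_sub_deriv_wtp_le_mul_log {lam1 lam2 σ : ℝ} (hσ : 1 < σ) {φ : ℝ → ℂ}
    (hφ : Differentiable ℝ φ) {t M x : ℝ} (ht : 2 ≤ t) (hx : ‖φ x‖ ≤ M) :
    ‖deriv (wp lam1 φ t) x - deriv (wtp lam1 lam2 σ φ t) x‖
      ≤ |lam2 / (1 - σ)| * M ^ (2 * σ) * (2 * |lam1| * M ^ (2 : ℝ) + (1 + 2 * σ) / Real.log 2)
        * t ^ (1 - σ) * Real.log t * ‖deriv φ x‖ := by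
  have hlog2 : 0 < Real.log 2 := Real.log_pos one_lt_two
  have hlog : Real.log 2 ≤ Real.log t := Real.log_le_log two_pos ht
  have hconst : 2 * |lam1| * M ^ (2 : ℝ) * Real.log t + 1 + 2 * σ
      ≤ (2 * |lam1| * M ^ (2 : ℝ) + (1 + 2 * σ) / Real.log 2) * Real.log t := by
    have : 1 + 2 * σ ≤ (1 + 2 * σ) / Real.log 2 * Real.log t := by
      rw [div_mul_eq_mul_div, le_div_iff₀ hlog2]
      gcongr
    rw [add_mul]
    linarith
  have hM : 0 ≤ M := (norm_nonneg _).trans hx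
  calc _ ≤ _ := norm_deriv_wp_sub_deriv_wtp_le hσ hφ (by linarith) hx
    _ ≤ |lam2 / (1 - σ)| * M ^ (2 * σ)
        * ((2 * |lam1| * M ^ (2 : ℝ) + (1 + 2 * σ) / Real.log 2) * Real.log t)
        * t ^ (1 - σ) * ‖deriv φ x‖ := by gcongr
    _ = _ := by ring

/-- `‖∂ₓ w_p(t,·) − ∂ₓ w̃_p(t,·)‖_{L²} ≤ C t^{1−σ} log t` for `t ≥ 2`. -/
theorem deriv_wp_sub_wtp_L2_bound (lam1 lam2 σ : ℝ) (hσ : 1 < σ) (φ : ℝ → ℂ)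
    (hφ : ContDiff ℝ 1 φ) (hinf : MemLp φ ⊤ volume)
    (hd2 : MemLp (deriv φ) 2 volume) :
    ∃ C > 0, ∀ t : ℝ, 2 ≤ t →
      eLpNorm (fun x => deriv (wp lam1 φ t) x - deriv (wtp lam1 lam2 σ φ t) x) 2 volume
        ≤ ENNReal.ofReal (C * t ^ (1-σ) * Real.log t) := by
  set M := (eLpNorm φ ∞ volume).toReal
  set B := (eLpNorm (deriv φ) 2 volume).toReal
  set K := |lam2 / (1 - σ)| * M ^ (2 * σ) * (2 * |lam1| * M ^ (2 : ℝ) + (1 + 2 * σ) / Real.log 2)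
  have hM : 0 ≤ M := ENNReal.toReal_nonneg
  have hB : eLpNorm (deriv φ) 2 volume = ENNReal.ofReal B := (ENNReal.ofReal_toReal hd2.2.ne).symm
  refine ⟨K * B + 1, by positivity, fun t ht => ?_⟩
  have hTL : 0 ≤ t ^ (1 - σ) * Real.log t :=
    mul_nonneg (Real.rpow_nonneg (by linarith) _) (Real.log_nonneg (by linarith))
  have hpointwise : ∀ᵐ x, ‖deriv (wp lam1 φ t) x - deriv (wtp lam1 lam2 σ φ t) x‖
      ≤ K * t ^ (1 - σ) * Real.log t * ‖deriv φ x‖ := by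
    filter_upwards [hinf.ae_norm_le_toReal_eLpNorm_top] with x hx
    exact norm_deriv_wp_sub_deriv_wtp_le_mul_log hσ (hφ.differentiable one_ne_zero) ht hx
  calc _ ≤ ENNReal.ofReal (K * t ^ (1 - σ) * Real.log t) * eLpNorm (deriv φ) 2 volume :=
        eLpNorm_le_mul_eLpNorm_of_ae_le_mul hpointwise 2
    _ = ENNReal.ofReal (K * B * t ^ (1 - σ) * Real.log t) := by
        rw [hB, ← ENNReal.ofReal_mul (by rw [mul_assoc]; positivity)]
        ring_nf
    _ ≤ ENNReal.ofReal ((K * B + 1) * t ^ (1 - σ) * Real.log t) :=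
        ENNReal.ofReal_le_ofReal (by nlinarith)
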